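/- Let P, Q be probability distributions on ℝ with everywhere positive continuous densities f_X, f_Y and CDFs F_X, F_Y. Suppose the condition (f_X(F_Y⁻¹(z)) − f_Y(F_Y⁻¹(z))) · (f_X(F_Y⁻¹(1−z)) − f_Y(F_Y⁻¹(1−z))) ≥ 0 holds for all z ∈ [0, 1/2]. Then equality holds in the halfspace-depth TVD bound: TVD(Q_P^{HD}, U) = TVD(P, Q), where Q_P^{HD} is the law of min{F_Y(X), 1 − F_Y(X)} for X ∼ P and U is the uniform distribution on [0, 1/2]. -/

import Mathlib

open MeasureTheory Set
open scoped ENNReal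

/-- The total variation distance between two measures on `ℝ`, computed via their
densities (Radon–Nikodym derivatives) with respect to Lebesgue measure:
`TVD(P,Q) = (1/2) ∫ |p(x) - q(x)| dx`. -/
noncomputable def TVD (μ ν : Measure ℝ) : ℝ :=
  (1 / 2) * ∫ x, |(μ.rnDeriv volume x).toReal - (ν.rnDeriv volume x).toReal|

open ProbabilityTheory Function

/-!
Write `F = F_Y`. Pushing forward by `F` turns `P` into the law with density `r = (f_X / f_Y) ∘ F⁻¹`
on `(0,1)` and `Q` into the uniform law on `(0,1)`; being a change of variables, this preserves the
`L¹` distance of the densities. The depth is `F` followed by the fold `t ↦ min t (1 - t)`, which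
turns a density `r` into `r t + r (1 - t)` on `(0, 1/2)`, and the uniform law into `U`. So
`2 TVD(Q_P^HD, U) = ∫₀^½ |(r t - 1) + (r (1 - t) - 1)|`; the sign condition makes the triangle
inequality an equality for every `t`, which leaves `∫₀¹ |r - 1| = 2 TVD(P, Q)`.
-/

section Densities

variable {p q : ℝ → ℝ}

theorem integrable_of_eq_withDensity_ofReal {μ : Measure ℝ} [IsFiniteMeasure μ]
    (hμ : μ = volume.withDensity fun x => ENNReal.ofReal (p x)) (hp : Measurable p) (hp0 : 0 ≤ p) :
    Integrable p := by
  have h := measure_ne_top μ univ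
  rw [hμ, withDensity_apply _ MeasurableSet.univ, Measure.restrict_univ] at h
  exact (lintegral_ofReal_ne_top_iff_integrable hp.aestronglyMeasurable (ae_of_all _ hp0)).1 h

theorem TVD_withDensity_ofReal (hp : Measurable p) (hq : Measurable q) (hp0 : 0 ≤ p)
    (hq0 : 0 ≤ q) :
    TVD (volume.withDensity fun x => ENNReal.ofReal (p x))
        (volume.withDensity fun x => ENNReal.ofReal (q x)) = 1 / 2 * ∫ x, |p x - q x| := by
  refine congrArg _ (integral_congr_ae ?_)
  filter_upwards [Measure.rnDeriv_withDensity volume hp.ennreal_ofReal,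
    Measure.rnDeriv_withDensity volume hq.ennreal_ofReal] with x hpx hqx
  rw [hpx, hqx, ENNReal.toReal_ofReal (hp0 x), ENNReal.toReal_ofReal (hq0 x)]

theorem hasDerivAt_cdf_of_eq_withDensity {μ : Measure ℝ} [IsProbabilityMeasure μ]
    (hμ : μ = volume.withDensity fun x => ENNReal.ofReal (p x)) (hp : Continuous p) (hp0 : 0 ≤ p)
    (x : ℝ) : HasDerivAt (cdf μ) (p x) x := by
  have hpi := integrable_of_eq_withDensity_ofReal hμ hp.measurable hp0
  have hcdf : ⇑(cdf μ) = fun y => (∫ t in Iic 0, p t) + ∫ t in (0 : ℝ)..y, p t := by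
    ext y
    rw [cdf_eq_real, measureReal_def, hμ, withDensity_apply _ measurableSet_Iic,
      ← integral_eq_lintegral_of_nonneg_ae (ae_of_all _ hp0) hp.aestronglyMeasurable.restrict,
      ← intervalIntegral.integral_Iic_sub_Iic hpi.integrableOn hpi.integrableOn]
    ring
  rw [hcdf]
  exact (intervalIntegral.integral_hasDerivAt_right hpi.intervalIntegrable
    (hp.stronglyMeasurableAtFilter _ _) hp.continuousAt).const_add _

theorem cdf_mem_Ioo_of_strictMono {μ : Measure ℝ} [IsProbabilityMeasure μ]
    (h : StrictMono (cdf μ)) (x : ℝ) : cdf μ x ∈ Ioo 0 1 :=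
  ⟨(cdf_nonneg μ (x - 1)).trans_lt (h (sub_one_lt x)),
    (h (lt_add_one x)).trans_le (cdf_le_one μ (x + 1))⟩

end Densities

-- `extend` instead of `f ∘ G⁻¹` makes this measurable without a measurable inverse of `G`.
noncomputable def pushDensity (G g f : ℝ → ℝ) : ℝ → ℝ :=
  extend G (fun x => f x / |g x|) 0

section PushDensity

variable {G g f f₁ f₂ : ℝ → ℝ}

theorem pushDensity_apply (hG : Injective G) (x : ℝ) : pushDensity G g f (G x) = f x / |g x| :=
  hG.extend_apply _ _ x

theorem pushDensity_of_notMem_range {t : ℝ} (ht : t ∉ range G) : pushDensity G g f t = 0 :=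
  extend_apply' _ _ _ ht

theorem pushDensity_nonneg (hf : 0 ≤ f) : 0 ≤ pushDensity G g f := by
  intro t
  unfold pushDensity Function.extend
  split_ifs
  exacts [div_nonneg (hf _) (abs_nonneg _), le_rfl]

theorem measurable_pushDensity (hG : ∀ x, HasDerivAt G (g x) x) (hG_inj : Injective G)
    (hf : Measurable f) : Measurable (pushDensity G g f) := by
  have hGm : Measurable G := (Differentiable.continuous fun x => (hG x).differentiableAt).measurable
  have hg : Measurable g := funext (fun x => (hG x).deriv) ▸ measurable_deriv G
  exact (hGm.measurableEmbedding hG_inj).measurable_extend (hf.div hg.abs) measurable_const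

theorem pushDensity_self (hG_inj : Injective G) (hg : ∀ x, 0 < g x) :
    pushDensity G g g = (range G).indicator 1 := by
  ext t
  by_cases ht : t ∈ range G
  · obtain ⟨x, rfl⟩ := ht
    rw [pushDensity_apply hG_inj, indicator_of_mem (mem_range_self x), abs_of_pos (hg x),
      div_self (hg x).ne', Pi.one_apply]
  · rw [pushDensity_of_notMem_range ht, indicator_of_notMem ht]

theorem pushDensity_sub_pushDensity (hG_inj : Injective G) (x : ℝ) :
    pushDensity G g f₁ (G x) - pushDensity G g f₂ (G x) = (f₁ x - f₂ x) / |g x| := by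
  rw [pushDensity_apply hG_inj, pushDensity_apply hG_inj, sub_div]

theorem map_withDensity_ofReal_eq_pushDensity (hG : ∀ x, HasDerivAt G (g x) x)
    (hG_inj : Injective G) (hg : ∀ x, g x ≠ 0) :
    (volume.withDensity fun x => ENNReal.ofReal (f x)).map G =
      volume.withDensity fun t => ENNReal.ofReal (pushDensity G g f t) := by
  have hGm : Measurable G := (Differentiable.continuous fun x => (hG x).differentiableAt).measurable
  ext A hA
  rw [Measure.map_apply hGm hA, withDensity_apply _ (hGm hA), withDensity_apply _ hA]
  calc ∫⁻ x in G ⁻¹' A, ENNReal.ofReal (f x)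
      = ∫⁻ x in G ⁻¹' A, ENNReal.ofReal |g x| * ENNReal.ofReal (pushDensity G g f (G x)) := by
        refine lintegral_congr fun x => ?_
        rw [pushDensity_apply hG_inj, ← ENNReal.ofReal_mul (abs_nonneg _),
          mul_div_cancel₀ _ (abs_ne_zero.2 (hg x))]
    _ = ∫⁻ t in A ∩ range G, ENNReal.ofReal (pushDensity G g f t) := by
        rw [← image_preimage_eq_inter_range, lintegral_image_eq_lintegral_abs_deriv_mul (hGm hA)
          (fun x _ => (hG x).hasDerivWithinAt) hG_inj.injOn]
    _ = ∫⁻ t in A, ENNReal.ofReal (pushDensity G g f t) := by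
        rw [inter_comm, ← Measure.restrict_restrict
          (hGm.measurableEmbedding hG_inj).measurableSet_range]
        refine setLIntegral_eq_of_support_subset fun t ht => ?_
        by_contra hGt
        simp [pushDensity_of_notMem_range hGt] at ht

theorem integral_abs_pushDensity_sub (hG : ∀ x, HasDerivAt G (g x) x) (hG_inj : Injective G)
    (hg : ∀ x, g x ≠ 0) :
    ∫ t, |pushDensity G g f₁ t - pushDensity G g f₂ t| = ∫ x, |f₁ x - f₂ x| := by
  rw [← setIntegral_eq_integral_of_forall_compl_eq_zero (s := range G) fun t ht => by
      simp [pushDensity_of_notMem_range ht], ← image_univ,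
    integral_image_eq_integral_abs_deriv_smul MeasurableSet.univ
      (fun x _ => (hG x).hasDerivWithinAt) hG_inj.injOn, Measure.restrict_univ]
  congr 1 with x
  rw [pushDensity_sub_pushDensity hG_inj, smul_eq_mul, abs_div, abs_abs,
    mul_div_cancel₀ _ (abs_ne_zero.2 (hg x))]

theorem TVD_map_withDensity_ofReal (hG : ∀ x, HasDerivAt G (g x) x) (hG_inj : Injective G)
    (hg : ∀ x, g x ≠ 0) (hf₁ : Measurable f₁) (hf₂ : Measurable f₂) (hf₁0 : 0 ≤ f₁)
    (hf₂0 : 0 ≤ f₂) :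
    TVD ((volume.withDensity fun x => ENNReal.ofReal (f₁ x)).map G)
        ((volume.withDensity fun x => ENNReal.ofReal (f₂ x)).map G) =
      TVD (volume.withDensity fun x => ENNReal.ofReal (f₁ x))
        (volume.withDensity fun x => ENNReal.ofReal (f₂ x)) := by
  rw [map_withDensity_ofReal_eq_pushDensity hG hG_inj hg,
    map_withDensity_ofReal_eq_pushDensity hG hG_inj hg,
    TVD_withDensity_ofReal (measurable_pushDensity hG hG_inj hf₁)
      (measurable_pushDensity hG hG_inj hf₂) (pushDensity_nonneg hf₁0) (pushDensity_nonneg hf₂0),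
    TVD_withDensity_ofReal hf₁ hf₂ hf₁0 hf₂0, integral_abs_pushDensity_sub hG hG_inj hg]

theorem pushDensity_sub_mul_nonneg {Ginv : ℝ → ℝ} (hG_inj : Injective G)
    (hG : ∀ x, G x ∈ Ioo 0 1) (hinv : ∀ z ∈ Ioo (0 : ℝ) 1, G (Ginv z) = z)
    (hcond : ∀ z ∈ Ioo (0 : ℝ) (1 / 2),
      0 ≤ (f₁ (Ginv z) - f₂ (Ginv z)) * (f₁ (Ginv (1 - z)) - f₂ (Ginv (1 - z))))
    {t : ℝ} (ht : t < 1 / 2) :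
    0 ≤ (pushDensity G g f₁ t - pushDensity G g f₂ t) *
      (pushDensity G g f₁ (1 - t) - pushDensity G g f₂ (1 - t)) := by
  rcases le_or_gt t 0 with ht0 | ht0
  · have hout : t ∉ range G := by
      rintro ⟨x, rfl⟩
      exact ht0.not_gt (hG x).1
    simp [pushDensity_of_notMem_range hout]
  have hdiff : ∀ z ∈ Ioo (0 : ℝ) 1, pushDensity G g f₁ z - pushDensity G g f₂ z =
      (f₁ (Ginv z) - f₂ (Ginv z)) / |g (Ginv z)| := fun z hz => by
    rw [← pushDensity_sub_pushDensity hG_inj, hinv z hz]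
  rw [hdiff t ⟨ht0, by linarith⟩, hdiff (1 - t) ⟨by linarith, by linarith⟩, div_mul_div_comm]
  exact div_nonneg (hcond t ⟨ht0, ht⟩) (by positivity)

end PushDensity

section Fold

variable {p q : ℝ → ℝ}

theorem map_min_sub_withDensity_ofReal (a : ℝ) (hp : Measurable p) (hp0 : 0 ≤ p) :
    (volume.withDensity fun t => ENNReal.ofReal (p t)).map (fun t => min t (a - t)) =
      volume.withDensity fun t =>
        ENNReal.ofReal ((Iio (a / 2)).indicator (fun s => p s + p (a - s)) t) := by
  have hfold : Measurable fun t : ℝ => min t (a - t) := by fun_prop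
  ext A hA
  rw [Measure.map_apply hfold hA, withDensity_apply _ (hfold hA), withDensity_apply _ hA]
  set B := (fun t => min t (a - t)) ⁻¹' A
  have hlow : B ∩ Iic (a / 2) = A ∩ Iic (a / 2) := by
    ext t
    simp only [B, mem_inter_iff, mem_preimage, mem_Iic]
    constructor <;> rintro ⟨h, ht⟩ <;> refine ⟨?_, ht⟩ <;> rwa [min_eq_left (by linarith)] at *
  have hhigh : B \ Iic (a / 2) = (fun t => a - t) ⁻¹' (A ∩ Iio (a / 2)) := by
    ext t
    simp only [B, mem_sdiff, mem_preimage, mem_Iic, mem_inter_iff, mem_Iio, not_le]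
    constructor <;> rintro ⟨h, ht⟩ <;> refine ⟨?_, by linarith⟩ <;>
      rwa [min_eq_right (by linarith)] at *
  have hrefl : ∫⁻ t in B \ Iic (a / 2), ENNReal.ofReal (p t) =
      ∫⁻ t in A ∩ Iio (a / 2), ENNReal.ofReal (p (a - t)) := by
    rw [hhigh, ← (Measure.measurePreserving_sub_left volume a).setLIntegral_comp_preimage
      (f := fun s => ENNReal.ofReal (p (a - s))) (hA.inter measurableSet_Iio) (by fun_prop)]
    simp only [sub_sub_cancel]
  rw [← lintegral_inter_add_sdiff _ B measurableSet_Iic, hlow, hrefl,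
    setLIntegral_congr ((ae_eq_refl A).inter Iio_ae_eq_Iic).symm]
  have hdens : ∀ t, ENNReal.ofReal ((Iio (a / 2)).indicator (fun s => p s + p (a - s)) t) =
      (Iio (a / 2)).indicator (fun s => ENNReal.ofReal (p s) + ENNReal.ofReal (p (a - s))) t :=
    fun t => by
      by_cases ht : t ∈ Iio (a / 2) <;> simp [ht, ENNReal.ofReal_add (hp0 _) (hp0 _)]
  simp_rw [hdens]
  rw [setLIntegral_indicator measurableSet_Iio, inter_comm,
    lintegral_add_left hp.ennreal_ofReal]

theorem TVD_map_min_sub_withDensity_ofReal (a : ℝ) (hp : Measurable p) (hq : Measurable q)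
    (hp0 : 0 ≤ p) (hq0 : 0 ≤ q) (hpi : Integrable p) (hqi : Integrable q)
    (hpq : ∀ t < a / 2, 0 ≤ (p t - q t) * (p (a - t) - q (a - t))) :
    TVD ((volume.withDensity fun t => ENNReal.ofReal (p t)).map fun t => min t (a - t))
        ((volume.withDensity fun t => ENNReal.ofReal (q t)).map fun t => min t (a - t)) =
      TVD (volume.withDensity fun t => ENNReal.ofReal (p t))
        (volume.withDensity fun t => ENNReal.ofReal (q t)) := by
  have hfold : ∀ {r : ℝ → ℝ}, Measurable r → 0 ≤ r →
      Measurable ((Iio (a / 2)).indicator fun s => r s + r (a - s)) ∧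
        0 ≤ (Iio (a / 2)).indicator fun s => r s + r (a - s) := fun hr hr0 =>
    ⟨(hr.add (hr.comp (measurable_const_sub a))).indicator measurableSet_Iio,
      indicator_nonneg fun t _ => add_nonneg (hr0 t) (hr0 (a - t))⟩
  rw [map_min_sub_withDensity_ofReal a hp hp0, map_min_sub_withDensity_ofReal a hq hq0,
    TVD_withDensity_ofReal (hfold hp hp0).1 (hfold hq hq0).1 (hfold hp hp0).2 (hfold hq hq0).2,
    TVD_withDensity_ofReal hp hq hp0 hq0]
  have hI : Integrable fun t => |p t - q t| := (hpi.sub hqi).abs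
  congr 1
  calc ∫ t, |(Iio (a / 2)).indicator (fun s => p s + p (a - s)) t -
          (Iio (a / 2)).indicator (fun s => q s + q (a - s)) t|
      = ∫ t in Iio (a / 2), |p t - q t| + |p (a - t) - q (a - t)| := by
        rw [← integral_indicator measurableSet_Iio]
        congr 1 with t
        by_cases ht : t ∈ Iio (a / 2)
        · simp only [indicator_of_mem ht]
          rw [← abs_add_eq_add_abs_iff _ _ |>.2 (mul_nonneg_iff.1 (hpq t ht))]
          congr 1
          ring
        · simp [indicator_of_notMem ht]
    _ = (∫ t in Iio (a / 2), |p t - q t|) + ∫ t in Ioi (a / 2), |p t - q t| := by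
        rw [integral_add hI.integrableOn (hI.comp_sub_left a).integrableOn,
          ← (Measure.measurePreserving_sub_left volume a).setIntegral_preimage_emb
            (measurableEmbedding_subLeft a) (fun t => |p t - q t|) (Ioi (a / 2)),
          preimage_const_sub_Ioi, sub_half]
    _ = ∫ t, |p t - q t| := by
        rw [← integral_Ici_eq_integral_Ioi,
          intervalIntegral.integral_Iio_add_Ici hI.integrableOn hI.integrableOn]

theorem map_min_sub_withDensity_indicator_Ioo (a : ℝ) :
    (volume.withDensity fun t => ENNReal.ofReal ((Ioo 0 a).indicator 1 t)).map
        (fun t => min t (a - t)) = (2 : ℝ≥0∞) • volume.restrict (Icc 0 (a / 2)) := by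
  rw [map_min_sub_withDensity_ofReal a (measurable_one.indicator measurableSet_Ioo)
      (indicator_nonneg fun _ _ => zero_le_one), ← Measure.restrict_congr_set Ioo_ae_eq_Icc,
    ← withDensity_const, ← withDensity_indicator measurableSet_Ioo]
  congr 1 with t
  by_cases ht : t < a / 2 <;> by_cases ht0 : 0 < t <;> simp [indicator, ht, ht0]
  norm_num [show t < a by linarith]

end Fold

theorem hd_induced_tvd_eq_of_condition
    (P Q : Measure ℝ) [IsProbabilityMeasure P] [IsProbabilityMeasure Q]
    (fX fY : ℝ → ℝ) (hfXpos : ∀ x, 0 < fX x) (hfYpos : ∀ x, 0 < fY x)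
    (hfXc : Continuous fX) (hfYc : Continuous fY)
    (hP : P = volume.withDensity (fun x => ENNReal.ofReal (fX x)))
    (hQ : Q = volume.withDensity (fun x => ENNReal.ofReal (fY x)))
    (FY : ℝ → ℝ)
    (hFY : ∀ x, FY x = (Q (Iic x)).toReal)
    (FYinv : ℝ → ℝ)
    (hinv : ∀ z ∈ Ioo (0 : ℝ) 1, FY (FYinv z) = z)
    (hcond : ∀ z ∈ Icc (0 : ℝ) (1 / 2),
      0 ≤ (fX (FYinv z) - fY (FYinv z)) * (fX (FYinv (1 - z)) - fY (FYinv (1 - z)))) :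
    TVD (Measure.map (fun x => min (FY x) (1 - FY x)) P)
        ((2 : ℝ≥0∞) • volume.restrict (Icc (0 : ℝ) (1 / 2))) = TVD P Q := by
  have hfX0 : 0 ≤ fX := fun x => (hfXpos x).le
  have hfY0 : 0 ≤ fY := fun x => (hfYpos x).le
  have hFY_cdf : FY = cdf Q := funext fun x => by rw [hFY, cdf_eq_real, measureReal_def]
  have hFY_deriv : ∀ x, HasDerivAt FY (fY x) x :=
    hFY_cdf ▸ hasDerivAt_cdf_of_eq_withDensity hQ hfYc hfY0
  have hFY_mono : StrictMono FY := strictMono_of_hasDerivAt_pos hFY_deriv hfYpos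
  have hFY_mem : ∀ x, FY x ∈ Ioo 0 1 := hFY_cdf ▸ cdf_mem_Ioo_of_strictMono (hFY_cdf ▸ hFY_mono)
  have hFY_range : range FY = Ioo 0 1 :=
    (range_subset_iff.2 hFY_mem).antisymm fun z hz => ⟨FYinv z, hinv z hz⟩
  have hfY_ne : ∀ x, fY x ≠ 0 := fun x => (hfYpos x).ne'
  have hmapP := hP ▸ map_withDensity_ofReal_eq_pushDensity hFY_deriv hFY_mono.injective hfY_ne
  have hmapQ := hQ ▸ map_withDensity_ofReal_eq_pushDensity hFY_deriv hFY_mono.injective hfY_ne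
  have hdensP := measurable_pushDensity hFY_deriv hFY_mono.injective hfXc.measurable
  have hdensQ := measurable_pushDensity hFY_deriv hFY_mono.injective hfYc.measurable
  calc TVD (P.map fun x => min (FY x) (1 - FY x)) ((2 : ℝ≥0∞) • volume.restrict (Icc 0 (1 / 2)))
      = TVD ((P.map FY).map fun t => min t (1 - t)) ((Q.map FY).map fun t => min t (1 - t)) := by
        rw [Measure.map_map (by fun_prop) hFY_mono.monotone.measurable, hmapQ,
          pushDensity_self hFY_mono.injective hfYpos, hFY_range,
          map_min_sub_withDensity_indicator_Ioo, comp_def]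
    _ = TVD (P.map FY) (Q.map FY) := by
        rw [hmapP, hmapQ]
        exact TVD_map_min_sub_withDensity_ofReal 1 hdensP hdensQ (pushDensity_nonneg hfX0)
          (pushDensity_nonneg hfY0)
          (integrable_of_eq_withDensity_ofReal hmapP hdensP (pushDensity_nonneg hfX0))
          (integrable_of_eq_withDensity_ofReal hmapQ hdensQ (pushDensity_nonneg hfY0))
          fun t ht => pushDensity_sub_mul_nonneg hFY_mono.injective hFY_mem hinv
            (fun z hz => hcond z (Ioo_subset_Icc_self hz)) ht
    _ = TVD P Q := by
        rw [hP, hQ]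
        exact TVD_map_withDensity_ofReal hFY_deriv hFY_mono.injective hfY_ne hfXc.measurable
          hfYc.measurable hfX0 hfY0
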